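/- arXiv:1707.08255 — 13 statements merged into one kernel-verified Lean document; each statement's English description precedes it below -/
import Mathlib

section
/- Soundness of the Augmentation axiom: for any epistemic transition system T and any sets A, B, C, D ⊆ V of views, if T ⊨ A ▷_B C then T ⊨ (A ∪ D) ▷_B (C ∪ D). -/
/-- A nonempty, prefix-closed, possibly finite or infinite sequence of states:
`toFun k = some w` means the sequence has a `k`-th element `w`. -/
structure PSeq (S : Type) where
  toFun : ℕ → Option S
  nonempty : (toFun 0).isSome
  closed : ∀ k, (toFun (k + 1)).isSome → (toFun k).isSome

/-- An epistemic transition system with views `V`, states `S`, and instructions `I`: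
an observation function and, for each instruction, a transition relation on states. -/
structure ETS (V S I : Type) where
  obs : S → V
  trans : I → S → S → Prop

/-- `π` belongs to `Path_s(A)`: the first state's view is in `A`, and each step
follows the transition relation of the instruction the strategy `s` prescribes. -/
def inPath {V S I : Type} (T : ETS V S I) (s : V → I) (A : Set V) (π : PSeq S) : Prop :=
  (∀ w, π.toFun 0 = some w → T.obs w ∈ A) ∧
  (∀ k w w', π.toFun k = some w → π.toFun (k + 1) = some w' →
      T.trans (s (T.obs w)) w w')

/-- `π'` is an extension of `π`: `π` is a (proper) prefix of `π'` or `π' = π`. -/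
def PSeq.ExtOf {S : Type} (π' π : PSeq S) : Prop :=
  ∀ k w, π.toFun k = some w → π'.toFun k = some w

/-- `π'` is a longer sequence extending `π`. -/
def PSeq.ProperExtOf {S : Type} (π' π : PSeq S) : Prop :=
  π'.ExtOf π ∧ ∃ k, π.toFun k = none ∧ (π'.toFun k).isSome

/-- `π` belongs to `MaxPath_s(A)`: it is in `Path_s(A)` and is either infinite
or cannot be extended to a longer sequence in `Path_s(A)`. -/
def inMaxPath {V S I : Type} (T : ETS V S I) (s : V → I) (A : Set V) (π : PSeq S) : Prop :=
  inPath T s A π ∧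
    ((∀ k, (π.toFun k).isSome) ∨
      ¬ ∃ π' : PSeq S, inPath T s A π' ∧ π'.ProperExtOf π)

/-- `π` belongs to `Until(A, B)`: there is `k₀` such that the views of all elements
before position `k₀` are in `A` and the view of the element at `k₀` is in `B`. -/
def inUntil {V S I : Type} (T : ETS V S I) (A B : Set V) (π : PSeq S) : Prop :=
  ∃ k0 : ℕ, (∀ k < k0, ∃ w, π.toFun k = some w ∧ T.obs w ∈ A) ∧
    (∃ w, π.toFun k0 = some w ∧ T.obs w ∈ B)

/-- `T ⊨ A ▷_B C`: some strategy `s` satisfies `MaxPath_s(A) ⊆ Until(B, C)`. -/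
def Nav {V S I : Type} (T : ETS V S I) (A B C : Set V) : Prop :=
  ∃ s : V → I, ∀ π : PSeq S, inMaxPath T s A π → inUntil T B C π

theorem augmentation_sound {V S I : Type} [Fintype V]
    (T : ETS V S I) (A B C D : Set V) (h : Nav T A B C) :
    Nav T (A ∪ D) B (C ∪ D) := by
  obtain ⟨s, hs⟩ := h
  refine ⟨s, fun π hπ => ?_⟩
  obtain ⟨⟨h0, htr⟩, hmax⟩ := hπ
  obtain ⟨w0, hw0⟩ := Option.isSome_iff_exists.mp π.nonempty
  rcases h0 w0 hw0 with hA | hD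
  · have hu : inUntil T B C π := by
      apply hs
      refine ⟨⟨fun w hw => ?_, htr⟩, ?_⟩
      · rw [hw0] at hw; cases hw; exact hA
      · rcases hmax with h1 | h2
        · exact Or.inl h1
        · exact Or.inr fun ⟨π', ⟨hp0, hptr⟩, hext⟩ =>
            h2 ⟨π', ⟨fun w hw => Or.inl (hp0 w hw), hptr⟩, hext⟩
    obtain ⟨k0, hk, w, hw, hwC⟩ := hu
    exact ⟨k0, hk, w, hw, Or.inl hwC⟩
  · exact ⟨0, fun k hk => absurd hk (Nat.not_lt_zero k), w0, hw0, Or.inr hD⟩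
end

section
/- Strategy-switching lemma: for any epistemic transition system, any sets A, B, C ⊆ V of views, and any strategies s_1, s_2, if MaxPath_{s_1}(A) ⊆ Until(B, C) and s_1(v) = s_2(v) for each v ∈ B, then MaxPath_{s_2}(A) ⊆ Until(B, C). -/
section Aux
variable {V S I : Type}

attribute [local instance] Classical.propDecidable

lemma PSeq.isSome_of_le (π : PSeq S) {k n : ℕ} (h : k ≤ n)
    (hn : (π.toFun n).isSome) : (π.toFun k).isSome := by
  obtain ⟨j, rfl⟩ := Nat.exists_eq_add_of_le h
  clear h
  induction j with
  | zero => exact hn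
  | succ j ih => exact ih (π.closed (k + j) hn)

/-- Greedy extension of the prefix of `π` up to position `m` by `s`-transitions. -/
noncomputable def extFun (T : ETS V S I) (s : V → I) (π : PSeq S) (m : ℕ) :
    ℕ → Option S
  | 0 => π.toFun 0
  | k + 1 =>
      if k + 1 ≤ m then π.toFun (k + 1)
      else (extFun T s π m k).bind fun w =>
        if h : ∃ w', T.trans (s (T.obs w)) w w' then some h.choose else none

lemma extFun_succ (T : ETS V S I) (s : V → I) (π : PSeq S) (m k : ℕ) :
    extFun T s π m (k + 1) =
      if k + 1 ≤ m then π.toFun (k + 1)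
      else (extFun T s π m k).bind fun w =>
        if h : ∃ w', T.trans (s (T.obs w)) w w' then some h.choose else none := by
  rw [extFun]

lemma extFun_of_le (T : ETS V S I) (s : V → I) (π : PSeq S) (m : ℕ) {k : ℕ}
    (hk : k ≤ m) : extFun T s π m k = π.toFun k := by
  cases k with
  | zero => rw [extFun]
  | succ k => rw [extFun_succ, if_pos hk]

lemma extFun_closed (T : ETS V S I) (s : V → I) (π : PSeq S) (m : ℕ)
    (hdef : ∀ k ≤ m, (π.toFun k).isSome) (k : ℕ)
    (h : (extFun T s π m (k + 1)).isSome) : (extFun T s π m k).isSome := by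
  by_cases hk : k + 1 ≤ m
  · rw [extFun_of_le T s π m (Nat.le_of_succ_le hk)]
    exact hdef k (Nat.le_of_succ_le hk)
  · rw [extFun_succ, if_neg hk] at h
    cases hg : extFun T s π m k with
    | none => rw [hg] at h; simp at h
    | some w => simp

lemma extFun_trans (T : ETS V S I) (s : V → I) (π : PSeq S) (m : ℕ)
    (hpre : ∀ k w w', k + 1 ≤ m → π.toFun k = some w →
      π.toFun (k + 1) = some w' → T.trans (s (T.obs w)) w w')
    (k : ℕ) (w w' : S) (hw : extFun T s π m k = some w)
    (hw' : extFun T s π m (k + 1) = some w') :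
    T.trans (s (T.obs w)) w w' := by
  by_cases hk : k + 1 ≤ m
  · exact hpre k w w' hk
      (by rw [← extFun_of_le T s π m (Nat.le_of_succ_le hk)]; exact hw)
      (by rw [← extFun_of_le T s π m hk]; exact hw')
  · rw [extFun_succ, if_neg hk, hw, Option.bind_some] at hw'
    by_cases h2 : ∃ w'', T.trans (s (T.obs w)) w w''
    · rw [dif_pos h2] at hw'
      injection hw' with hh
      exact hh ▸ h2.choose_spec
    · rw [dif_neg h2] at hw'
      exact absurd hw' (by simp)

lemma extFun_none (T : ETS V S I) (s : V → I) (π : PSeq S) (m : ℕ)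
    (hdef : ∀ k ≤ m, (π.toFun k).isSome) (k : ℕ) (w : S)
    (hw : extFun T s π m k = some w) (hn : extFun T s π m (k + 1) = none) :
    ¬ ∃ w', T.trans (s (T.obs w)) w w' := by
  by_cases hk : k + 1 ≤ m
  · rw [extFun_of_le T s π m hk] at hn
    have := hdef (k + 1) hk
    rw [hn] at this; simp at this
  · rw [extFun_succ, if_neg hk, hw, Option.bind_some] at hn
    intro h2
    rw [dif_pos h2] at hn
    simp at hn

/-- The greedy extension, packaged as a `PSeq`. -/
noncomputable def extPSeq (T : ETS V S I) (s : V → I) (π : PSeq S) (m : ℕ)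
    (hdef : ∀ k ≤ m, (π.toFun k).isSome) : PSeq S where
  toFun := extFun T s π m
  nonempty := by rw [extFun_of_le T s π m (Nat.zero_le m)]; exact π.nonempty
  closed := extFun_closed T s π m hdef

lemma extPSeq_maxpath (T : ETS V S I) (s : V → I) (π : PSeq S) (m : ℕ) (A : Set V)
    (hdef : ∀ k ≤ m, (π.toFun k).isSome)
    (hpre : ∀ k w w', k + 1 ≤ m → π.toFun k = some w →
      π.toFun (k + 1) = some w' → T.trans (s (T.obs w)) w w')
    (hA : ∀ w, π.toFun 0 = some w → T.obs w ∈ A) :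
    inMaxPath T s A (extPSeq T s π m hdef) := by
  constructor
  · constructor
    · intro w hw
      apply hA
      rw [← extFun_of_le T s π m (Nat.zero_le m)]
      exact hw
    · exact extFun_trans T s π m hpre
  · right
    rintro ⟨π', hπ', hext, k, hk, hk'⟩
    have key : ∀ k, ¬ (extFun T s π m k = none ∧ (π'.toFun k).isSome) := by
      intro k
      induction k using Nat.strong_induction_on with
      | _ k ih =>
        rintro ⟨hnone, hsome⟩
        match k with
        | 0 =>
          rw [extFun_of_le T s π m (Nat.zero_le m)] at hnone
          have := π.nonempty
          rw [hnone] at this; simp at this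
        | j + 1 =>
          cases hg : extFun T s π m j with
          | none =>
            exact ih j (Nat.lt_succ_self j) ⟨hg, π'.closed j hsome⟩
          | some w =>
            obtain ⟨w', hw'⟩ := Option.isSome_iff_exists.mp hsome
            have hpj : π'.toFun j = some w := hext j w hg
            have ht := hπ'.2 j w w' hpj hw'
            exact extFun_none T s π m hdef j w hg hnone ⟨w', ht⟩
    exact key k ⟨hk, hk'⟩

end Aux

theorem strategy_switch {V S I : Type} [Fintype V]
    (T : ETS V S I) (A B C : Set V) (s₁ s₂ : V → I)
    (h₁ : ∀ π : PSeq S, inMaxPath T s₁ A π → inUntil T B C π)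
    (h₂ : ∀ v ∈ B, s₁ v = s₂ v) :
    ∀ π : PSeq S, inMaxPath T s₂ A π → inUntil T B C π := by
  intro π hπ
  classical
  by_cases hB : ∃ k, ∃ w, π.toFun k = some w ∧ T.obs w ∉ B
  · -- Case A: some position of π has a view outside B
    set m := Nat.find hB with hm
    obtain ⟨wm, hwm, hwmB⟩ := Nat.find_spec hB
    have hmin : ∀ k < m, ∀ w, π.toFun k = some w → T.obs w ∈ B := by
      intro k hk w hw
      by_contra hc
      exact Nat.find_min hB hk ⟨w, hw, hc⟩
    have hdef : ∀ k ≤ m, (π.toFun k).isSome := fun k hk =>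
      PSeq.isSome_of_le π hk (by rw [hwm]; rfl)
    have hpre : ∀ k w w', k + 1 ≤ m → π.toFun k = some w →
        π.toFun (k + 1) = some w' → T.trans (s₁ (T.obs w)) w w' := by
      intro k w w' hk hw hw'
      rw [h₂ _ (hmin k (Nat.lt_of_succ_le hk) w hw)]
      exact hπ.1.2 k w w' hw hw'
    obtain ⟨k0, hk0B, w0, hw0, hw0C⟩ :=
      h₁ _ (extPSeq_maxpath T s₁ π m A hdef hpre hπ.1.1)
    have hk0m : k0 ≤ m := by
      by_contra hc
      push_neg at hc
      obtain ⟨w, hw, hwB⟩ := hk0B m hc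
      have : extFun T s₁ π m m = some wm := by
        rw [extFun_of_le T s₁ π m (le_refl m)]; exact hwm
      rw [show (extPSeq T s₁ π m hdef).toFun m = extFun T s₁ π m m from rfl, this] at hw
      injection hw with hh
      exact hwmB (hh ▸ hwB)
    refine ⟨k0, ?_, w0, ?_, hw0C⟩
    · intro k hk
      obtain ⟨w, hw, hwB⟩ := hk0B k hk
      refine ⟨w, ?_, hwB⟩
      rw [← extFun_of_le T s₁ π m (le_trans (le_of_lt hk) hk0m)]
      exact hw
    · rw [← extFun_of_le T s₁ π m hk0m]
      exact hw0
  · -- all views of π lie in B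
    push_neg at hB
    by_cases hinf : ∀ k, (π.toFun k).isSome
    · -- Case C: π is infinite, hence itself a maximal s₁-path
      refine h₁ π ⟨⟨hπ.1.1, ?_⟩, Or.inl hinf⟩
      intro k w w' hw hw'
      rw [h₂ _ (hB k w hw)]
      exact hπ.1.2 k w w' hw hw'
    · -- Case B: π is finite with all views in B
      push_neg at hinf
      have hex : ∃ k, π.toFun k = none := by
        obtain ⟨k, hk⟩ := hinf
        exact ⟨k, Option.not_isSome_iff_eq_none.mp hk⟩
      set L := Nat.find hex with hLdef
      have hL : π.toFun L = none := Nat.find_spec hex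
      have hLpos : 0 < L := by
        rcases Nat.eq_zero_or_pos L with h0 | h0
        · have := π.nonempty
          rw [← h0, hL] at this; simp at this
        · exact h0
      have hsome_lt : ∀ k, (π.toFun k).isSome → k < L := by
        intro k hk
        by_contra hc
        push_neg at hc
        have := PSeq.isSome_of_le π hc hk
        rw [hL] at this; simp at this
      set m := L - 1 with hmdef
      have hmL : m + 1 = L := Nat.succ_pred_eq_of_pos hLpos
      have hdef : ∀ k ≤ m, (π.toFun k).isSome := by
        intro k hk
        by_contra hc
        exact Nat.find_min hex (by omega) (Option.not_isSome_iff_eq_none.mp hc)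
      have hpre : ∀ k w w', k + 1 ≤ m → π.toFun k = some w →
          π.toFun (k + 1) = some w' → T.trans (s₁ (T.obs w)) w w' := by
        intro k w w' hk hw hw'
        rw [h₂ _ (hB k w hw)]
        exact hπ.1.2 k w w' hw hw'
      obtain ⟨k0, hk0B, w0, hw0, hw0C⟩ :=
        h₁ _ (extPSeq_maxpath T s₁ π m A hdef hpre hπ.1.1)
      by_cases hk0m : k0 ≤ m
      · refine ⟨k0, ?_, w0, ?_, hw0C⟩
        · intro k hk
          obtain ⟨w, hw, hwB⟩ := hk0B k hk
          refine ⟨w, ?_, hwB⟩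
          rw [← extFun_of_le T s₁ π m (le_trans (le_of_lt hk) hk0m)]
          exact hw
        · rw [← extFun_of_le T s₁ π m hk0m]
          exact hw0
      · exfalso
        push_neg at hk0m
        have hLk0 : L ≤ k0 := by omega
        set g := extPSeq T s₁ π m hdef with hg
        have hgL : (g.toFun L).isSome :=
          PSeq.isSome_of_le g hLk0 (Option.isSome_iff_exists.mpr ⟨w0, hw0⟩)
        have hπ'' : ∃ π'' : PSeq S, π''.toFun = fun k => if k ≤ L then g.toFun k else none := by
          refine ⟨⟨fun k => if k ≤ L then g.toFun k else none, ?_, ?_⟩, rfl⟩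
          · simp only [if_pos (Nat.zero_le L)]; exact g.nonempty
          · intro k hk
            by_cases hkL : k + 1 ≤ L
            · simp only [if_pos hkL] at hk
              simp only [if_pos (Nat.le_of_succ_le hkL)]
              exact g.closed k hk
            · simp only [if_neg hkL] at hk; simp at hk
        obtain ⟨π'', hπ''⟩ := hπ''
        have hnotext := hπ.2.resolve_left (by
          intro h
          have := h L
          rw [hL] at this; simp at this)
        refine hnotext ⟨π'', ⟨?_, ?_⟩, ?_, L, hL, ?_⟩
        · intro w hw
          rw [hπ''] at hw
          simp only [if_pos (Nat.zero_le L)] at hw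
          apply hπ.1.1
          rw [← extFun_of_le T s₁ π m (Nat.zero_le m)]
          exact hw
        · intro k w w' hw hw'
          rw [hπ''] at hw hw'
          by_cases hkL : k + 1 ≤ L
          · simp only [if_pos hkL] at hw'
            simp only [if_pos (Nat.le_of_succ_le hkL)] at hw
            have hkm : k ≤ m := by omega
            have hwπ : π.toFun k = some w := by
              rw [← extFun_of_le T s₁ π m hkm]; exact hw
            rw [← h₂ _ (hB k w hwπ)]
            exact extFun_trans T s₁ π m hpre k w w' hw hw'
          · simp only [if_neg hkL] at hw'; simp at hw'
        · intro k w hw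
          have hkL : k < L := hsome_lt k (by rw [hw]; rfl)
          rw [hπ'']
          simp only [if_pos (le_of_lt hkL)]
          rw [← extFun_of_le T s₁ π m (by omega)] at hw
          exact hw
        · rw [hπ'']
          simp only [if_pos (le_refl L)]
          exact hgL
end

section
/- Soundness of the Transitivity axiom: for any epistemic transition system T and any sets A, B, C, D, E ⊆ V of views with B ∩ D = ∅, if T ⊨ A ▷_B C and T ⊨ C ▷_D E, then T ⊨ A ▷_{B ∪ D} E. -/
namespace NavAux

variable {V S I : Type}

attribute [local instance] Classical.propDecidable

lemma isSome_mono (π : PSeq S) {j k : ℕ} (h : j ≤ k) (hs : (π.toFun k).isSome) :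
    (π.toFun j).isSome := by
  induction k with
  | zero => exact Nat.le_zero.mp h ▸ hs
  | succ n ih =>
    rcases eq_or_lt_of_le h with rfl | h'
    · exact hs
    · exact ih (Nat.lt_succ_iff.mp h') (π.closed n hs)

lemma none_mono (π : PSeq S) {j k : ℕ} (h : j ≤ k) (hn : π.toFun j = none) :
    π.toFun k = none := by
  cases hc : π.toFun k with
  | none => rfl
  | some w =>
    have := isSome_mono π h (by simp [hc])
    simp [hn] at this

noncomputable def succOpt (T : ETS V S I) (s : V → I) (w : S) : Option S :=
  if h : ∃ w', T.trans (s (T.obs w)) w w' then some h.choose else none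

lemma succOpt_some (T : ETS V S I) (s : V → I) {w w' : S}
    (h : succOpt T s w = some w') : T.trans (s (T.obs w)) w w' := by
  unfold succOpt at h
  split at h
  · next h' =>
    rw [Option.some.injEq] at h
    exact h ▸ h'.choose_spec
  · simp at h

lemma succOpt_none (T : ETS V S I) (s : V → I) {w : S}
    (h : succOpt T s w = none) : ¬ ∃ w', T.trans (s (T.obs w)) w w' := by
  unfold succOpt at h
  split at h
  · simp at h
  · next h' => exact h'

noncomputable def extFun (T : ETS V S I) (s : V → I) (σ : PSeq S) : ℕ → Option S
  | 0 => σ.toFun 0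
  | (k+1) => (σ.toFun (k+1)).elim ((extFun T s σ k).bind (succOpt T s)) some

lemma extFun_zero (T : ETS V S I) (s : V → I) (σ : PSeq S) :
    extFun T s σ 0 = σ.toFun 0 := by rw [extFun]

lemma extFun_succ (T : ETS V S I) (s : V → I) (σ : PSeq S) (k : ℕ) :
    extFun T s σ (k+1) = (σ.toFun (k+1)).elim ((extFun T s σ k).bind (succOpt T s)) some := by
  rw [extFun]

lemma extFun_agree (T : ETS V S I) (s : V → I) (σ : PSeq S) :
    ∀ k w, σ.toFun k = some w → extFun T s σ k = some w := by
  intro k w h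
  cases k with
  | zero => rw [extFun_zero, h]
  | succ n => rw [extFun_succ, h]; rfl

lemma extFun_closed (T : ETS V S I) (s : V → I) (σ : PSeq S) (k : ℕ)
    (h : (extFun T s σ (k+1)).isSome) : (extFun T s σ k).isSome := by
  cases hσ : σ.toFun (k+1) with
  | some w =>
    obtain ⟨u, hu⟩ := Option.isSome_iff_exists.mp (σ.closed k (by simp [hσ]))
    rw [extFun_agree T s σ k u hu]; rfl
  | none =>
    rw [extFun_succ, hσ] at h
    cases he : extFun T s σ k with
    | none => rw [he] at h; simp [Option.elim] at h
    | some u => simp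

noncomputable def extSeq (T : ETS V S I) (s : V → I) (σ : PSeq S) : PSeq S where
  toFun := extFun T s σ
  nonempty := by rw [extFun_zero]; exact σ.nonempty
  closed := extFun_closed T s σ

lemma exists_max_ext (T : ETS V S I) (s : V → I) (A : Set V) (σ : PSeq S)
    (hσ : inPath T s A σ) : ∃ τ : PSeq S, inMaxPath T s A τ ∧ τ.ExtOf σ := by
  refine ⟨extSeq T s σ, ⟨⟨?_, ?_⟩, Or.inr ?_⟩, fun k w h => extFun_agree T s σ k w h⟩
  · intro w h
    have h' : extFun T s σ 0 = some w := h
    rw [extFun_zero] at h'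
    exact hσ.1 w h'
  · intro k w w' h1 h2
    have h1' : extFun T s σ k = some w := h1
    have h2' : extFun T s σ (k+1) = some w' := h2
    cases hσ2 : σ.toFun (k+1) with
    | some w₂ =>
      obtain ⟨u, hu⟩ := Option.isSome_iff_exists.mp (σ.closed k (by simp [hσ2]))
      have e1 := extFun_agree T s σ k u hu
      rw [h1'] at e1
      have e2 := extFun_agree T s σ (k+1) w₂ hσ2
      rw [h2'] at e2
      have e1' : u = w := by simpa using e1.symm
      have e2' : w' = w₂ := by simpa using e2
      rw [← e1', e2']
      exact hσ.2 k u w₂ hu hσ2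
    | none =>
      rw [extFun_succ, hσ2, h1'] at h2'
      exact succOpt_some T s h2'
  · rintro ⟨π', hπ', hext, k, hknone, hksome⟩
    have hne : ∃ k, extFun T s σ k = none := ⟨k, hknone⟩
    have hk₀ := Nat.find_spec hne
    set k₀ := Nat.find hne with hk₀def
    have hk₀pos : k₀ ≠ 0 := by
      intro h
      rw [h, extFun_zero] at hk₀
      have := σ.nonempty
      simp [hk₀] at this
    obtain ⟨m, hm⟩ := Nat.exists_eq_succ_of_ne_zero hk₀pos
    have hm' : k₀ = m + 1 := hm
    have hmlt : extFun T s σ m ≠ none := Nat.find_min hne (by omega)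
    obtain ⟨u, hu⟩ := Option.ne_none_iff_exists'.mp hmlt
    have hnone1 : extFun T s σ (m+1) = none := by rw [← hm']; exact hk₀
    cases hσ2 : σ.toFun (m+1) with
    | some w₂ =>
      rw [extFun_agree T s σ (m+1) w₂ hσ2] at hnone1
      simp at hnone1
    | none =>
      rw [extFun_succ, hσ2, hu] at hnone1
      have hnos := succOpt_none T s hnone1
      have hk₀le : k₀ ≤ k := Nat.find_min' hne hknone
      obtain ⟨y, hy⟩ := Option.isSome_iff_exists.mp (isSome_mono π' hk₀le hksome)
      have hy' : π'.toFun m = some u := hext m u hu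
      have := hπ'.2 m u y hy' (by rw [← hm']; exact hy)
      exact hnos ⟨y, this⟩

lemma deadend (T : ETS V S I) (s : V → I) (A : Set V) (π : PSeq S)
    (h : inMaxPath T s A π) {n : ℕ} {u : S} (hn : π.toFun n = some u)
    (hn1 : π.toFun (n+1) = none) : ¬ ∃ u', T.trans (s (T.obs u)) u u' := by
  rintro ⟨u', hu'⟩
  rcases h.2 with hall | hnext
  · have := hall (n+1)
    simp [hn1] at this
  · apply hnext
    refine ⟨⟨fun k => if k ≤ n then π.toFun k else if k = n+1 then some u' else none,
      ?_, ?_⟩, ⟨?_, ?_⟩, ?_, n+1, hn1, ?_⟩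
    · simp only [Nat.zero_le, if_pos]
      exact π.nonempty
    · intro k hk
      by_cases h1 : k + 1 ≤ n
      · simp only [h1, if_pos, Nat.le_of_succ_le h1] at *
        exact π.closed k hk
      · by_cases h2 : k + 1 = n + 1
        · have : k = n := by omega
          simp only [this, le_refl, if_pos]
          simp [hn]
        · simp [h1, h2] at hk
          exact (h2 (by omega)).elim
    · intro w hw
      simp only [Nat.zero_le, if_pos] at hw
      exact h.1.1 w hw
    · intro k w₁ w₂ h1 h2
      by_cases hc1 : k + 1 ≤ n
      · simp only [hc1, if_pos, Nat.le_of_succ_le hc1] at h1 h2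
        exact h.1.2 k w₁ w₂ h1 h2
      · by_cases hc2 : k + 1 = n + 1
        · have hk : k = n := by omega
          subst hk
          have e1 : u = w₁ := by simpa [hn] using h1
          have e2 : u' = w₂ := by simpa [hc1] using h2
          rw [← e1, ← e2]
          exact hu'
        · simp [hc1, hc2] at h2
          exact (hc2 (by rw [h2.1])).elim
    · intro k w hw
      by_cases hc : k ≤ n
      · simp [hc, hw]
      · have : n + 1 ≤ k := by omega
        rw [none_mono π this hn1] at hw
        exact absurd hw (by simp)
    · have hne : ¬ (n+1 ≤ n) := by omega
      simp [hne]

def shiftSeq (π : PSeq S) (j : ℕ) (h : (π.toFun j).isSome) : PSeq S where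
  toFun t := π.toFun (j + t)
  nonempty := h
  closed k hk := π.closed (j + k) hk

def truncSeq (π : PSeq S) (j m : ℕ) (h : (π.toFun j).isSome) : PSeq S where
  toFun t := if t ≤ m then π.toFun (j + t) else none
  nonempty := by simp only [Nat.zero_le, if_pos]; exact h
  closed k hk := by
    by_cases h1 : k + 1 ≤ m
    · simp only [h1, if_pos, Nat.le_of_succ_le h1] at *
      exact π.closed (j + k) hk
    · simp [h1] at hk

lemma core (T : ETS V S I) (s s' : V → I) (W A' B' C' : Set V)
    (hagree : ∀ v ∈ W, s v = s' v) (hsub : B' ⊆ W)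
    (hnav : ∀ τ : PSeq S, inMaxPath T s' A' τ → inUntil T B' C' τ)
    (π : PSeq S)
    (hstep : ∀ k w w', π.toFun k = some w → π.toFun (k+1) = some w' →
      T.trans (s (T.obs w)) w w')
    (hDE : ∀ n u, π.toFun n = some u → π.toFun (n+1) = none →
      ¬ ∃ u', T.trans (s (T.obs u)) u u')
    (j : ℕ) (w : S) (hj : π.toFun j = some w) (hw : T.obs w ∈ A') :
    ∃ i, (∀ t, t < i → ∃ u, π.toFun (j+t) = some u ∧ T.obs u ∈ B') ∧
      (∃ u, π.toFun (j+i) = some u ∧ T.obs u ∈ C') := by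
  have hjs : (π.toFun j).isSome := by simp [hj]
  by_cases hQ : ∀ t, ∃ u, π.toFun (j+t) = some u ∧ T.obs u ∈ W
  · -- Case II : the shifted path stays in W forever (hence is infinite)
    have hppath : inPath T s' A' (shiftSeq π j hjs) := by
      constructor
      · intro w' hw'
        have h0 : π.toFun (j+0) = some w' := hw'
        have e : w = w' := by simpa [hj] using h0
        exact e ▸ hw
      · intro t u₁ u₂ h1 h2
        have h1' : π.toFun (j+t) = some u₁ := h1
        have h2' : π.toFun (j+t+1) = some u₂ := h2
        obtain ⟨u₀, h₀, hW⟩ := hQ t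
        have e : u₀ = u₁ := Option.some.inj (h₀.symm.trans h1')
        rw [← hagree (T.obs u₁) (e ▸ hW)]
        exact hstep (j+t) u₁ u₂ h1' h2'
    have hmax : inMaxPath T s' A' (shiftSeq π j hjs) := by
      refine ⟨hppath, Or.inl fun k => ?_⟩
      obtain ⟨u₀, h₀, _⟩ := hQ k
      show (π.toFun (j+k)).isSome
      simp [h₀]
    obtain ⟨k₀, hB, x, hx, hC⟩ := hnav (shiftSeq π j hjs) hmax
    exact ⟨k₀, fun t ht => hB t ht, ⟨x, hx, hC⟩⟩
  · have hex : ∃ t, ¬ ∃ u, π.toFun (j+t) = some u ∧ T.obs u ∈ W := not_forall.mp hQ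
    set m := Nat.find hex with hmdef
    have hm := Nat.find_spec hex
    have hlt : ∀ t, t < m → ∃ u, π.toFun (j+t) = some u ∧ T.obs u ∈ W :=
      fun t ht => of_not_not (Nat.find_min hex ht)
    cases hcase : π.toFun (j+m) with
    | some u =>
      have huW : T.obs u ∉ W := fun h => hm ⟨u, hcase, h⟩
      have hppath : inPath T s' A' (truncSeq π j m hjs) := by
        constructor
        · intro w' hw'
          have h0 : π.toFun (j+0) = some w' := by
            simpa [truncSeq, Nat.zero_le] using hw'
          have e : w = w' := by simpa [hj] using h0
          exact e ▸ hw
        · intro t u₁ u₂ h1 h2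
          have h2m : t + 1 ≤ m := by
            by_contra hc
            simp [truncSeq, hc] at h2
          have h1m : t ≤ m := Nat.le_of_succ_le h2m
          have h1' : π.toFun (j+t) = some u₁ := by simpa [truncSeq, h1m] using h1
          have h2' : π.toFun (j+t+1) = some u₂ := by simpa [truncSeq, h2m, Nat.add_assoc] using h2
          obtain ⟨u₀, h₀, hW⟩ := hlt t h2m
          have e : u₀ = u₁ := Option.some.inj (h₀.symm.trans h1')
          rw [← hagree (T.obs u₁) (e ▸ hW)]
          exact hstep (j+t) u₁ u₂ h1' h2'
      obtain ⟨τ, hτmax, hτext⟩ := exists_max_ext T s' A' (truncSeq π j m hjs) hppath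
      obtain ⟨k₀, hB, x, hx, hC⟩ := hnav τ hτmax
      have hpm : (truncSeq π j m hjs).toFun m = some u := by simp [truncSeq, hcase]
      have hk₀m : k₀ ≤ m := by
        by_contra hc
        push_neg at hc
        obtain ⟨y, hy, hyB⟩ := hB m hc
        have hτm := hτext m u hpm
        have e : u = y := Option.some.inj (hτm.symm.trans hy)
        exact huW (hsub (e ▸ hyB))
      refine ⟨k₀, ?_, ?_⟩
      · intro t ht
        obtain ⟨u₀, h₀, hW⟩ := hlt t (lt_of_lt_of_le ht hk₀m)
        obtain ⟨y, hy, hyB⟩ := hB t ht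
        have hpt : (truncSeq π j m hjs).toFun t = some u₀ := by
          simp [truncSeq, le_of_lt (lt_of_lt_of_le ht hk₀m), h₀]
        have e : u₀ = y := Option.some.inj ((hτext t u₀ hpt).symm.trans hy)
        exact ⟨u₀, h₀, e ▸ hyB⟩
      · have hz : ∃ z, π.toFun (j + k₀) = some z := by
          rcases lt_or_eq_of_le hk₀m with h' | h'
          · obtain ⟨u₀, h₀, _⟩ := hlt k₀ h'
            exact ⟨u₀, h₀⟩
          · exact ⟨u, by rw [h']; exact hcase⟩
        obtain ⟨z, hzz⟩ := hz
        have hpk : (truncSeq π j m hjs).toFun k₀ = some z := by simp [truncSeq, hk₀m, hzz]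
        have e : z = x := Option.some.inj ((hτext k₀ z hpk).symm.trans hx)
        exact ⟨z, hzz, e ▸ hC⟩
    | none =>
      have hm0 : m ≠ 0 := by
        intro h
        rw [h] at hcase
        simp [hj] at hcase
      have hppath : inPath T s' A' (shiftSeq π j hjs) := by
        constructor
        · intro w' hw'
          have h0 : π.toFun (j+0) = some w' := hw'
          have e : w = w' := by simpa [hj] using h0
          exact e ▸ hw
        · intro t u₁ u₂ h1 h2
          have h1' : π.toFun (j+t) = some u₁ := h1
          have h2' : π.toFun (j+t+1) = some u₂ := h2
          have htm : t < m := by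
            by_contra hc
            push_neg at hc
            have : π.toFun (j+t) = none := none_mono π (by omega) hcase
            simp [this] at h1'
          obtain ⟨u₀, h₀, hW⟩ := hlt t htm
          have e : u₀ = u₁ := Option.some.inj (h₀.symm.trans h1')
          rw [← hagree (T.obs u₁) (e ▸ hW)]
          exact hstep (j+t) u₁ u₂ h1' h2'
      have hmax : inMaxPath T s' A' (shiftSeq π j hjs) := by
        refine ⟨hppath, Or.inr ?_⟩
        rintro ⟨π', hπ'path, hext', k, hknone, hksome⟩
        have hknone' : π.toFun (j+k) = none := hknone
        have hkm : m ≤ k := by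
          by_contra hc
          push_neg at hc
          obtain ⟨u₀, h₀, _⟩ := hlt k hc
          simp [h₀] at hknone'
        obtain ⟨y, hy⟩ := Option.isSome_iff_exists.mp (isSome_mono π' hkm hksome)
        obtain ⟨u', h₀, hW⟩ := hlt (m-1) (by omega)
        have hπ'm1 : π'.toFun (m-1) = some u' := hext' (m-1) u' h₀
        have hms : m - 1 + 1 = m := by omega
        have htr := hπ'path.2 (m-1) u' y hπ'm1 (by rw [hms]; exact hy)
        have hDE' := hDE (j+(m-1)) u' h₀ (by
          have hh : j + (m-1) + 1 = j + m := by omega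
          rw [hh]; exact hcase)
        rw [← hagree (T.obs u') hW] at htr
        exact hDE' ⟨y, htr⟩
      obtain ⟨k₀, hB, x, hx, hC⟩ := hnav (shiftSeq π j hjs) hmax
      exact ⟨k₀, fun t ht => hB t ht, ⟨x, hx, hC⟩⟩

end NavAux

theorem transitivity_sound {V S I : Type} [Fintype V]
    (T : ETS V S I) (A B C D E : Set V) (hBD : B ∩ D = ∅)
    (h₁ : Nav T A B C) (h₂ : Nav T C D E) :
    Nav T A (B ∪ D) E := by
  classical
  obtain ⟨s₁, hs₁⟩ := h₁
  obtain ⟨s₂, hs₂⟩ := h₂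
  refine ⟨fun v => if v ∈ D then s₂ v else s₁ v, ?_⟩
  set s : V → I := fun v => if v ∈ D then s₂ v else s₁ v with hsdef
  intro π hπ
  have hstep : ∀ k w w', π.toFun k = some w → π.toFun (k+1) = some w' →
      T.trans (s (T.obs w)) w w' := hπ.1.2
  have hDE : ∀ n u, π.toFun n = some u → π.toFun (n+1) = none →
      ¬ ∃ u', T.trans (s (T.obs u)) u u' :=
    fun n u hn hn1 => NavAux.deadend T s A π hπ hn hn1
  obtain ⟨w₀, hw₀⟩ := Option.isSome_iff_exists.mp π.nonempty
  have hw₀A : T.obs w₀ ∈ A := hπ.1.1 w₀ hw₀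
  have hagree₁ : ∀ v ∈ (Dᶜ : Set V), s v = s₁ v := fun v hv => if_neg hv
  have hsub₁ : B ⊆ (Dᶜ : Set V) := by
    intro v hv hvD
    have hmem : v ∈ B ∩ D := ⟨hv, hvD⟩
    rw [hBD] at hmem
    exact hmem
  obtain ⟨j, hjB, u, hu, huC⟩ :=
    NavAux.core T s s₁ Dᶜ A B C hagree₁ hsub₁ hs₁ π hstep hDE 0 w₀ hw₀ hw₀A
  have hu' : π.toFun j = some u := by simpa using hu
  have hagree₂ : ∀ v ∈ D, s v = s₂ v := fun v hv => if_pos hv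
  obtain ⟨i, hiD, x, hxx, hxE⟩ :=
    NavAux.core T s s₂ D C D E hagree₂ (fun v hv => hv) hs₂ π hstep hDE j u hu' huC
  refine ⟨j + i, ?_, ⟨x, hxx, hxE⟩⟩
  intro k hk
  by_cases hkj : k < j
  · obtain ⟨y, hy, hyB⟩ := hjB k hkj
    exact ⟨y, by simpa using hy, Or.inl hyB⟩
  · push_neg at hkj
    obtain ⟨y, hy, hyD⟩ := hiD (k - j) (by omega)
    refine ⟨y, ?_, Or.inr hyD⟩
    rw [show j + (k - j) = k by omega] at hy
    exact hy
end

section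
/- Soundness of the Early Bird axiom: for any epistemic transition system T and any sets A, B, C ⊆ V of views, if T ⊨ A ▷_B C then T ⊨ A ▷_{B \ C} C. -/
theorem earlyBird_sound {V S I : Type} [Fintype V]
    (T : ETS V S I) (A B C : Set V) (h : Nav T A B C) :
    Nav T A (B \ C) C := by
  obtain ⟨s, hs⟩ := h
  refine ⟨s, fun π hπ => ?_⟩
  obtain ⟨k0, hB, w0, hw0, hw0C⟩ := hs π hπ
  have hP : ∃ k, ∃ w, π.toFun k = some w ∧ T.obs w ∈ C := ⟨k0, w0, hw0, hw0C⟩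
  classical
  let m := Nat.find hP
  have hm : ∃ w, π.toFun m = some w ∧ T.obs w ∈ C := Nat.find_spec hP
  have hmle : m ≤ k0 := Nat.find_le ⟨w0, hw0, hw0C⟩
  refine ⟨m, fun k hk => ?_, hm⟩
  obtain ⟨w, hw, hwB⟩ := hB k (lt_of_lt_of_le hk hmle)
  refine ⟨w, hw, hwB, fun hwC => ?_⟩
  exact Nat.find_min hP hk ⟨w, hw, hwC⟩
end

section
/- Soundness of the Trivial Path axiom: for any epistemic transition system T and any sets A, B ⊆ V of views, if T ⊨ A ▷_∅ B then T ⊨ (A \ B) ▷_∅ ∅. -/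
theorem trivialPath_sound {V S I : Type} [Fintype V]
    (T : ETS V S I) (A B : Set V) (h : Nav T A ∅ B) :
    Nav T (A \ B) ∅ ∅ := by
  obtain ⟨s, hs⟩ := h
  refine ⟨s, fun π hπ => ?_⟩
  exfalso
  obtain ⟨⟨h0, hstep⟩, hmax⟩ := hπ
  obtain ⟨w0, hw0⟩ := Option.isSome_iff_exists.mp π.nonempty
  have hw0A : T.obs w0 ∈ A \ B := h0 w0 hw0
  -- π is also maximal in Path_s(A)
  have hπA : inPath T s A π := ⟨fun w hw => (h0 w hw).1, hstep⟩
  have hmaxA : inMaxPath T s A π := by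
    refine ⟨hπA, ?_⟩
    rcases hmax with hinf | hnoext
    · exact Or.inl hinf
    · refine Or.inr ?_
      rintro ⟨π', ⟨h0', hstep'⟩, hext⟩
      refine hnoext ⟨π', ⟨?_, hstep'⟩, hext⟩
      intro w hw
      have : π'.toFun 0 = some w0 := hext.1 0 w0 hw0
      rw [this] at hw
      injection hw with hw
      exact hw ▸ hw0A
  obtain ⟨k0, hkA, w, hw, hwB⟩ := hs π hmaxA
  rcases Nat.eq_zero_or_pos k0 with rfl | hpos
  · rw [hw0] at hw
    injection hw with hw
    exact hw0A.2 (hw ▸ hwB)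
  · obtain ⟨w', _, hw'⟩ := hkA 0 hpos
    exact hw'
end

section
/- Soundness of the Path to Nowhere axiom: for any epistemic transition system T and any sets A, B ⊆ V of views, if T ⊨ A ▷_B ∅ then T ⊨ A ▷_∅ ∅. -/
theorem pathToNowhere_sound {V S I : Type} [Fintype V]
    (T : ETS V S I) (A B : Set V) (h : Nav T A B ∅) :
    Nav T A ∅ ∅ := by
  obtain ⟨s, hs⟩ := h
  refine ⟨s, fun π hπ => absurd (hs π hπ) ?_⟩
  rintro ⟨k, -, w, -, hw⟩
  exact hw
end

section
/- Left weakening is derivable: for any sets A, A', B, C ⊆ V with A' ⊆ A, the formula A ▷_B C → A' ▷_B C is derivable in the logical system (i.e., ⊢ A ▷_B C → A' ▷_B C). -/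
/-- Formulas: atoms `A ▷_B C` for sets of views, negation, and implication. -/
inductive Formula (V : Type) : Type _ where
  | atom : Set V → Set V → Set V → Formula V
  | neg : Formula V → Formula V
  | imp : Formula V → Formula V → Formula V

/-- Evaluation of a formula under a truth assignment to the atoms. -/
def Formula.eval {V : Type} (val : Set V → Set V → Set V → Prop) :
    Formula V → Prop
  | .atom A B C => val A B C
  | .neg φ => ¬ φ.eval val
  | .imp φ ψ => φ.eval val → ψ.eval val

/-- Propositional tautologies: true under every truth assignment to the atoms. -/
def Tautology {V : Type} (φ : Formula V) : Prop :=
  ∀ val : Set V → Set V → Set V → Prop, φ.eval val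

/-- `Derives X φ` (written `X ⊢ φ`): derivability from the axioms of the logical
system together with the additional hypotheses `X`, using Modus Ponens. -/
inductive Derives {V : Type} (X : Set (Formula V)) : Formula V → Prop where
  | hyp {φ : Formula V} : φ ∈ X → Derives X φ
  | taut {φ : Formula V} : Tautology φ → Derives X φ
  | refl {A B C : Set V} : A ⊆ C → Derives X (.atom A B C)
  | aug {A B C D : Set V} :
      Derives X (.imp (.atom A B C) (.atom (A ∪ D) B (C ∪ D)))
  | trans {A B C D E : Set V} : B ∩ D = ∅ →
      Derives X (.imp (.atom A B C) (.imp (.atom C D E) (.atom A (B ∪ D) E)))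
  | earlyBird {A B C : Set V} :
      Derives X (.imp (.atom A B C) (.atom A (B \ C) C))
  | trivialPath {A B : Set V} :
      Derives X (.imp (.atom A ∅ B) (.atom (A \ B) ∅ ∅))
  | nowhere {A B : Set V} :
      Derives X (.imp (.atom A B ∅) (.atom A ∅ ∅))
  | mp {φ ψ : Formula V} : Derives X (.imp φ ψ) → Derives X φ → Derives X ψ

theorem left_weakening {V : Type} [Fintype V] (A A' B C : Set V) (h : A' ⊆ A) :
    Derives (∅ : Set (Formula V)) (.imp (.atom A B C) (.atom A' B C)) := by
  have t : Derives (∅ : Set (Formula V))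
      (.imp (.atom A' ∅ A) (.imp (.atom A B C) (.atom A' (∅ ∪ B) C))) :=
    Derives.trans (by simp)
  have r : Derives (∅ : Set (Formula V)) (.atom A' ∅ A) := Derives.refl h
  have := t.mp r
  simpa [Set.empty_union] using this
end

section
/- Middle weakening is derivable: for any sets A, B, B', C ⊆ V with B ⊆ B', the formula A ▷_B C → A ▷_{B'} C is derivable in the logical system (i.e., ⊢ A ▷_B C → A ▷_{B'} C). -/
theorem middle_weakening {V : Type} [Fintype V] (A B B' C : Set V) (h : B ⊆ B') :
    Derives (∅ : Set (Formula V)) (.imp (.atom A B C) (.atom A B' C)) := by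
  have hD : B ∩ (B' \ B) = ∅ := by ext x; simp
  have htr := Derives.trans (X := (∅ : Set (Formula V))) (A := A) (B := B)
    (C := C) (D := B' \ B) (E := C) hD
  rw [Set.union_diff_cancel h] at htr
  have hrefl : Derives (∅ : Set (Formula V)) (.atom C (B' \ B) C) :=
    Derives.refl (subset_refl C)
  have hswap : Tautology ((Formula.imp (.atom A B C)
      (Formula.imp (.atom C (B' \ B) C) (.atom A B' C))).imp
      ((Formula.atom C (B' \ B) C).imp
        ((Formula.atom A B C).imp (.atom A B' C)))) := by
    intro val; simp only [Formula.eval]; tauto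
  exact (Derives.taut hswap).mp htr |>.mp hrefl
end

section
/- Right weakening is derivable: for any sets A, B, C, C' ⊆ V with C ⊆ C', the formula A ▷_B C → A ▷_B C' is derivable in the logical system (i.e., ⊢ A ▷_B C → A ▷_B C'). -/
theorem right_weakening {V : Type} [Fintype V] (A B C C' : Set V) (h : C ⊆ C') :
    Derives (∅ : Set (Formula V)) (.imp (.atom A B C) (.atom A B C')) := by
  have htr : Derives (∅ : Set (Formula V))
      (.imp (.atom A B C) (.imp (.atom C ∅ C') (.atom A (B ∪ ∅) C'))) :=
    Derives.trans (by simp)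
  rw [Set.union_empty] at htr
  have hrefl : Derives (∅ : Set (Formula V)) (.atom C ∅ C') := Derives.refl h
  have hswap : Derives (∅ : Set (Formula V))
      (.imp (.imp (.atom A B C) (.imp (.atom C ∅ C') (.atom A B C')))
        (.imp (.atom C ∅ C') (.imp (.atom A B C) (.atom A B C')))) :=
    Derives.taut (fun val => by simp [Formula.eval]; tauto)
  exact Derives.mp (Derives.mp hswap htr) hrefl
end

section
/- Void removal is derivable: for any sets A, B, B', C ⊆ V, the formula B' ▷_∅ ∅ → (A ▷_B C → A ▷_{B \ B'} C) is derivable in the logical system (i.e., ⊢ B' ▷_∅ ∅ → (A ▷_B C → A ▷_{B \ B'} C)). -/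
/-- Lifting: from `X ⊢ ψ` deduce `X ⊢ φ → ψ`. -/
lemma Derives.lift {V : Type} {X : Set (Formula V)} {φ ψ : Formula V}
    (h : Derives X ψ) : Derives X (.imp φ ψ) :=
  Derives.mp (Derives.taut (φ := .imp ψ (.imp φ ψ))
    (fun val => by simp only [Formula.eval]; tauto)) h

/-- Deduction theorem. -/
lemma Derives.deduction {V : Type} {X : Set (Formula V)} {φ ψ : Formula V}
    (h : Derives (insert φ X) ψ) : Derives X (.imp φ ψ) := by
  induction h with
  | hyp hm =>
      rcases hm with rfl | hm
      · exact Derives.taut (fun val => by simp only [Formula.eval]; tauto)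
      · exact Derives.lift (Derives.hyp hm)
  | taut ht => exact Derives.lift (Derives.taut ht)
  | refl hs => exact Derives.lift (Derives.refl hs)
  | aug => exact Derives.lift Derives.aug
  | trans hd => exact Derives.lift (Derives.trans hd)
  | earlyBird => exact Derives.lift Derives.earlyBird
  | trivialPath => exact Derives.lift Derives.trivialPath
  | nowhere => exact Derives.lift Derives.nowhere
  | mp _ _ ih1 ih2 =>
      exact Derives.mp (Derives.mp (Derives.taut
        (fun val => by simp only [Formula.eval]; tauto)) ih1) ih2

theorem void_removal {V : Type} [Fintype V] (A B B' C : Set V) :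
    Derives (∅ : Set (Formula V))
      (.imp (.atom B' ∅ ∅) (.imp (.atom A B C) (.atom A (B \ B') C))) := by
  apply Derives.deduction
  apply Derives.deduction
  set X : Set (Formula V) :=
    insert (.atom A B C) (insert (.atom B' ∅ ∅) ∅) with hX
  have h0 : Derives X (.atom B' ∅ ∅) := Derives.hyp (by simp [hX])
  have h1 : Derives X (.atom A B C) := Derives.hyp (by simp [hX])
  -- step 1: A∪B' ▷_B C∪B'
  have d1 : Derives X (.atom (A ∪ B') B (C ∪ B')) := Derives.mp Derives.aug h1
  -- step 2: early bird
  have d2 : Derives X (.atom (A ∪ B') (B \ (C ∪ B')) (C ∪ B')) :=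
    Derives.mp Derives.earlyBird d1
  -- step 3: trans with reflexivity to enlarge the subscript to B \ B'
  have disj1 : (B \ (C ∪ B')) ∩ ((B ∩ C) \ B') = ∅ := by
    ext x; simp; tauto
  have d3 : Derives X (.atom (A ∪ B') ((B \ (C ∪ B')) ∪ ((B ∩ C) \ B')) (C ∪ B')) :=
    Derives.mp (Derives.mp (Derives.trans disj1) d2)
      (Derives.refl (le_refl _))
  have e1 : (B \ (C ∪ B')) ∪ ((B ∩ C) \ B') = B \ B' := by
    ext x; simp; tauto
  rw [e1] at d3
  -- step 4: compose with A ▷_∅ A∪B'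
  have d4 : Derives X (.atom A (∅ : Set V) (A ∪ B')) :=
    Derives.refl Set.subset_union_left
  have disj2 : (∅ : Set V) ∩ (B \ B') = ∅ := Set.empty_inter _
  have d5 : Derives X (.atom A ((∅ : Set V) ∪ (B \ B')) (C ∪ B')) :=
    Derives.mp (Derives.mp (Derives.trans disj2) d4) d3
  rw [Set.empty_union] at d5
  -- step 5: C∪B' ▷_∅ C from the void hypothesis, then compose
  have d6 : Derives X (.atom (B' ∪ C) (∅ : Set V) ((∅ : Set V) ∪ C)) :=
    Derives.mp Derives.aug h0
  rw [Set.empty_union, Set.union_comm B' C] at d6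
  have disj3 : (B \ B') ∩ (∅ : Set V) = ∅ := Set.inter_empty _
  have d7 : Derives X (.atom A ((B \ B') ∪ (∅ : Set V)) C) :=
    Derives.mp (Derives.mp (Derives.trans disj3) d5) d6
  rw [Set.union_empty] at d7
  exact d7
end

section
/- Generalized transitivity is derivable: for any sets A, B, C, D, E ⊆ V with B ∩ D ⊆ C, the formula A ▷_B C → (C ▷_D E → A ▷_{B ∪ D} E) is derivable in the logical system (i.e., ⊢ A ▷_B C → (C ▷_D E → A ▷_{B ∪ D} E)). -/
lemma derives_comp {V : Type} {X : Set (Formula V)} {φ ψ χ : Formula V}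
    (h1 : Derives X (.imp φ ψ)) (h2 : Derives X (.imp ψ χ)) :
    Derives X (.imp φ χ) := by
  have t : Derives X (.imp (.imp φ ψ) (.imp (.imp ψ χ) (.imp φ χ))) :=
    Derives.taut (fun val => by simp [Formula.eval]; tauto)
  exact (t.mp h1).mp h2

lemma derives_comp2 {V : Type} {X : Set (Formula V)} {φ χ ψ ψ' : Formula V}
    (h1 : Derives X (.imp φ (.imp χ ψ))) (h2 : Derives X (.imp ψ ψ')) :
    Derives X (.imp φ (.imp χ ψ')) := by
  have t : Derives X (.imp (.imp φ (.imp χ ψ)) (.imp (.imp ψ ψ') (.imp φ (.imp χ ψ')))) :=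
    Derives.taut (fun val => by simp [Formula.eval]; tauto)
  exact (t.mp h1).mp h2

theorem generalized_transitivity {V : Type} [Fintype V] (A B C D E : Set V)
    (h : B ∩ D ⊆ C) :
    Derives (∅ : Set (Formula V))
      (.imp (.atom A B C) (.imp (.atom C D E) (.atom A (B ∪ D) E))) := by
  have hd : (B \ C) ∩ D = ∅ := by
    ext x; simp only [Set.mem_inter_iff, Set.mem_diff, Set.mem_empty_iff_false, iff_false]
    rintro ⟨⟨hB, hC⟩, hD⟩
    exact hC (h ⟨hB, hD⟩)
  have step1 : Derives (∅ : Set (Formula V))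
      (.imp (.atom A B C) (.imp (.atom C D E) (.atom A ((B \ C) ∪ D) E))) :=
    derives_comp Derives.earlyBird (Derives.trans hd)
  set S : Set V := (B \ C) ∪ D with hS
  set D' : Set V := (B ∪ D) \ S with hD'
  have hdisj : S ∩ D' = ∅ := by
    ext x; simp [hD']
  have hsub : S ⊆ B ∪ D := by
    intro x hx; rcases hx with hx | hx
    · exact Or.inl hx.1
    · exact Or.inr hx
  have hunion : S ∪ D' = B ∪ D := by
    rw [hD', Set.union_diff_cancel' (le_refl S) hsub]
  have weak : Derives (∅ : Set (Formula V))
      (.imp (.atom A S E) (.atom A (B ∪ D) E)) := by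
    have t2 : Derives (∅ : Set (Formula V))
        (.imp (.atom A S E) (.imp (.atom E D' E) (.atom A (S ∪ D') E))) :=
      Derives.trans hdisj
    rw [hunion] at t2
    have swap : Derives (∅ : Set (Formula V))
        (.imp (.imp (.atom A S E) (.imp (.atom E D' E) (.atom A (B ∪ D) E)))
          (.imp (.atom E D' E) (.imp (.atom A S E) (.atom A (B ∪ D) E)))) :=
      Derives.taut (fun val => by simp [Formula.eval]; tauto)
    exact (swap.mp t2).mp (Derives.refl (le_refl E))
  exact derives_comp2 step1 weak
end

section
/- For any set X of formulas, any integer n ≥ 0, and any views b_1, …, b_n ∈ V such that X ⊢ {b_j} ▷_∅ ∅ for each j (i.e., each b_j is not valid with respect to X), it holds that X ⊢ {b_1, …, b_n} ▷_∅ ∅. -/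
theorem derives_union {V : Type} {X : Set (Formula V)} {A A' : Set V}
    (h1 : Derives X (.atom A ∅ ∅)) (h2 : Derives X (.atom A' ∅ ∅)) :
    Derives X (.atom (A ∪ A') ∅ ∅) := by
  have step1 : Derives X (.atom (A ∪ A') ∅ A') := by
    have := Derives.mp (Derives.aug (D := A')) h1
    simpa using this
  have htr := Derives.trans (X := X) (A := A ∪ A') (B := (∅ : Set V))
    (C := A') (D := (∅ : Set V)) (E := (∅ : Set V)) (by simp)
  have := Derives.mp (Derives.mp htr step1) h2
  simpa using this

theorem nonvalid_set {V : Type} [Fintype V] (X : Set (Formula V))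
    (n : ℕ) (b : Fin n → V)
    (h : ∀ j : Fin n, Derives X (.atom {b j} ∅ ∅)) :
    Derives X (.atom (Set.range b) ∅ ∅) := by
  induction n with
  | zero =>
      have : Set.range b = (∅ : Set V) := by
        simp [Set.range_eq_empty]
      rw [this]
      exact Derives.refl (by simp)
  | succ n ih =>
      have hrange : Set.range b = {b 0} ∪ Set.range (fun i : Fin n => b i.succ) := by
        ext x
        simp [Set.mem_range, Fin.exists_fin_succ, eq_comm]
      rw [hrange]
      exact derives_union (h 0) (ih (fun i => b i.succ) (fun j => h j.succ))
end

section
/- For any set X of formulas and any sets A, B, C ⊆ V, if X ⊢ A ▷_B C, then (A \ C) ∩ Valid ⊆ B, where Valid = {v ∈ V | X ⊬ {v} ▷_∅ ∅}. -/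
theorem valid_part_subset {V : Type} [Fintype V] (X : Set (Formula V))
    (A B C : Set V) (h : Derives X (.atom A B C)) :
    (A \ C) ∩ {v : V | ¬ Derives X (.atom {v} ∅ ∅)} ⊆ B := by
  intro v hv
  by_contra hvB
  obtain ⟨⟨hvA, hvC⟩, hvalid⟩ := hv
  apply hvalid
  -- {v} ▷_∅ A
  have h1 : Derives X (.atom {v} ∅ A) :=
    Derives.refl (Set.singleton_subset_iff.mpr hvA)
  -- {v} ▷_B C
  have h2 : Derives X (.atom {v} (∅ ∪ B) C) :=
    Derives.mp (Derives.mp (Derives.trans (Set.empty_inter B)) h1) h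
  rw [Set.empty_union] at h2
  -- C ▷_∅ (C ∪ B)
  have h3 : Derives X (.atom C ∅ (C ∪ B)) :=
    Derives.refl Set.subset_union_left
  -- {v} ▷_B (C ∪ B)
  have h4 : Derives X (.atom {v} (B ∪ ∅) (C ∪ B)) :=
    Derives.mp (Derives.mp (Derives.trans (Set.inter_empty B)) h2) h3
  rw [Set.union_empty] at h4
  -- early bird: {v} ▷_∅ (C ∪ B)
  have h5 : Derives X (.atom {v} (B \ (C ∪ B)) (C ∪ B)) :=
    Derives.mp Derives.earlyBird h4
  rw [Set.diff_eq_empty.mpr Set.subset_union_right] at h5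
  -- trivial path
  have h6 : Derives X (.atom ({v} \ (C ∪ B)) ∅ ∅) :=
    Derives.mp Derives.trivialPath h5
  have : ({v} : Set V) \ (C ∪ B) = {v} := by
    ext x
    simp only [Set.mem_diff, Set.mem_singleton_iff, Set.mem_union]
    constructor
    · rintro ⟨hx, _⟩; exact hx
    · rintro rfl; exact ⟨rfl, fun h => h.elim hvC hvB⟩
  rwa [this] at h6
end
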